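/- Let G be a finite solvable group and let A, B, C be subgroups of G whose indices [G:A], [G:B], [G:C] are pairwise coprime. Then the Hawkes graph of G is the union of the Hawkes graphs of A, B and C; explicitly, π(G) = π(A) ∪ π(B) ∪ π(C), and for all primes p, q: q divides |G/O_{p',p}(G)| if and only if q divides |A/O_{p',p}(A)|, or q divides |B/O_{p',p}(B)|, or q divides |C/O_{p',p}(C)|. -/

import Mathlib

/-- The join of a set of normal subgroups is normal. -/
theorem sSup_normal {G : Type*} [Group G] (S : Set (Subgroup G)) (hS : ∀ N ∈ S, N.Normal) :
    (sSup S).Normal := by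
  constructor
  intro n hn g
  rw [sSup_eq_iSup'] at hn ⊢
  refine Subgroup.iSup_induction (C := fun x => g * x * g⁻¹ ∈ ⨆ N : S, (N : Subgroup G))
    _ hn ?_ ?_ ?_
  · intro N x hx
    exact Subgroup.mem_iSup_of_mem N ((hS N N.2).conj_mem x hx g)
  · simpa using Subgroup.one_mem _
  · intro x y hx hy
    have h : g * (x * y) * g⁻¹ = (g * x * g⁻¹) * (g * y * g⁻¹) := by group
    rw [h]; exact Subgroup.mul_mem _ hx hy

/-- The `p'`-core `O_{p'}(G)`: the largest normal subgroup of `G` of order coprime to `p`,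
realized as the join of all normal subgroups of order coprime to `p`. -/
def pPrimeCore (p : ℕ) (G : Type*) [Group G] : Subgroup G :=
  sSup {N : Subgroup G | N.Normal ∧ Nat.Coprime (Nat.card N) p}

instance pPrimeCore_normal (p : ℕ) (G : Type*) [Group G] : (pPrimeCore p G).Normal :=
  sSup_normal _ fun _ hN => hN.1

/-- The `p`-core `O_p(G)`: the largest normal `p`-subgroup of `G`,
realized as the join of all normal `p`-subgroups. -/
def pCore (p : ℕ) (G : Type*) [Group G] : Subgroup G :=
  sSup {N : Subgroup G | N.Normal ∧ IsPGroup p N}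

instance pCore_normal (p : ℕ) (G : Type*) [Group G] : (pCore p G).Normal :=
  sSup_normal _ fun _ hN => hN.1

/-- `O_{p',p}(G)`: the preimage in `G` of `O_p(G / O_{p'}(G))`. -/
def OpPrimeP (p : ℕ) (G : Type*) [Group G] : Subgroup G :=
  (pCore p (G ⧸ pPrimeCore p G)).comap (QuotientGroup.mk' (pPrimeCore p G))

/-- A Schmidt group: a non-nilpotent group all of whose proper subgroups are nilpotent. -/
def IsSchmidt (G : Type*) [Group G] : Prop :=
  ¬ Group.IsNilpotent G ∧ ∀ H : Subgroup G, H ≠ ⊤ → Group.IsNilpotent H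

/-- A Schmidt `(p,q)`-group: a Schmidt group whose order is divisible by exactly the
primes `p` and `q` and whose Sylow `p`-subgroup is normal. -/
def IsSchmidtPQ (p q : ℕ) (G : Type*) [Group G] : Prop :=
  IsSchmidt G ∧ (Nat.card G).primeFactors = {p, q} ∧ ∃ P : Sylow p G, (P : Subgroup G).Normal

section Infra
variable {G : Type*} [Group G] {p : ℕ}

theorem card_map_dvd {G' : Type*} [Group G'] (f : G →* G') (H : Subgroup G) [Finite G] :
    Nat.card (H.map f) ∣ Nat.card H := by
  have : (H.map f) = (f.comp H.subtype).range := by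
    rw [MonoidHom.range_comp, Subgroup.range_subtype]
  rw [this]
  have h2 := Subgroup.card_eq_card_quotient_mul_card_subgroup (f.comp H.subtype).ker
  rw [Nat.card_congr (QuotientGroup.quotientKerEquivRange (f.comp H.subtype)).toEquiv] at h2
  exact ⟨_, h2⟩

theorem card_sup_dvd {H K : Subgroup G} [K.Normal] [Finite G] :
    Nat.card ↥(H ⊔ K) ∣ Nat.card H * Nat.card K := by
  have e := QuotientGroup.quotientInfEquivProdNormalQuotient H K
  have h1 : Nat.card ↥(H ⊔ K) =
      Nat.card (↥(H ⊔ K) ⧸ K.subgroupOf (H ⊔ K)) * Nat.card (K.subgroupOf (H ⊔ K)) :=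
    Subgroup.card_eq_card_quotient_mul_card_subgroup _
  have h2 : Nat.card (K.subgroupOf (H ⊔ K)) = Nat.card K :=
    Nat.card_congr (Subgroup.subgroupOfEquivOfLe le_sup_right).toEquiv
  have h3 : Nat.card (↥(H ⊔ K) ⧸ K.subgroupOf (H ⊔ K)) = Nat.card (↥H ⧸ K.subgroupOf H) :=
    (Nat.card_congr e.toEquiv).symm
  have h4 : Nat.card (↥H ⧸ K.subgroupOf H) ∣ Nat.card H := by
    rw [← Subgroup.index_eq_card]; exact Subgroup.index_dvd_card _
  rw [h1, h2, h3]
  exact Nat.mul_dvd_mul_right h4 _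

theorem sSup_coprime_card (S : Set (Subgroup G)) [Finite G]
    (hS : ∀ N ∈ S, N.Normal ∧ (Nat.card N).Coprime p) :
    (sSup S).Normal ∧ (Nat.card ↥(sSup S : Subgroup G)).Coprime p := by
  refine Set.Finite.induction_on (motive := fun (s : Set (Subgroup G)) _ => (∀ N ∈ s, N.Normal ∧ (Nat.card N).Coprime p) →
    (sSup s).Normal ∧ (Nat.card ↥(sSup s : Subgroup G)).Coprime p) S (S.toFinite) ?_ ?_ hS
  · intro _
    rw [sSup_empty]
    exact ⟨inferInstance, by simp [Subgroup.card_bot]⟩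
  · intro a s _ _ IH h
    have ha := h a (Set.mem_insert a s)
    obtain ⟨hn, hc⟩ := IH (fun N hN => h N (Set.mem_insert_of_mem a hN))
    rw [sSup_insert]
    haveI := hn
    haveI := ha.1
    refine ⟨Subgroup.sup_normal _ _, ?_⟩
    exact Nat.Coprime.coprime_dvd_left card_sup_dvd (Nat.Coprime.mul ha.2 hc)

theorem sSup_isPGroup (S : Set (Subgroup G)) [Finite G]
    (hS : ∀ N ∈ S, N.Normal ∧ IsPGroup p N) :
    IsPGroup p ↥(sSup S : Subgroup G) := by
  suffices h : (sSup S).Normal ∧ IsPGroup p ↥(sSup S : Subgroup G) from h.2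
  refine Set.Finite.induction_on (motive := fun (s : Set (Subgroup G)) _ => (∀ N ∈ s, N.Normal ∧ IsPGroup p N) →
    (sSup s).Normal ∧ IsPGroup p ↥(sSup s : Subgroup G)) S (S.toFinite) ?_ ?_ hS
  · intro _
    rw [sSup_empty]
    exact ⟨inferInstance, IsPGroup.of_bot⟩
  · intro a s _ _ IH h
    have ha := h a (Set.mem_insert a s)
    obtain ⟨hn, hc⟩ := IH (fun N hN => h N (Set.mem_insert_of_mem a hN))
    rw [sSup_insert]
    haveI := hn
    haveI := ha.1
    exact ⟨Subgroup.sup_normal _ _, IsPGroup.to_sup_of_normal_right ha.2 hc⟩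

theorem pPrimeCore_coprime (p : ℕ) (G : Type*) [Group G] [Finite G] :
    (Nat.card (pPrimeCore p G)).Coprime p :=
  (sSup_coprime_card _ (fun _ hN => hN)).2

theorem pCore_isPGroup (p : ℕ) (G : Type*) [Group G] [Finite G] :
    IsPGroup p (pCore p G) :=
  sSup_isPGroup _ (fun _ hN => hN)

theorem le_pPrimeCore {N : Subgroup G} (hn : N.Normal) (hc : (Nat.card N).Coprime p) :
    N ≤ pPrimeCore p G := le_sSup ⟨hn, hc⟩

theorem le_pCore {N : Subgroup G} (hn : N.Normal) (hc : IsPGroup p N) :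
    N ≤ pCore p G := le_sSup ⟨hn, hc⟩

instance OpPrimeP_normal (p : ℕ) (G : Type*) [Group G] : (OpPrimeP p G).Normal :=
  Subgroup.normal_comap _

theorem pPrimeCore_le_OpPrimeP (p : ℕ) (G : Type*) [Group G] :
    pPrimeCore p G ≤ OpPrimeP p G := by
  intro x hx
  have : QuotientGroup.mk' (pPrimeCore p G) x = 1 := (QuotientGroup.eq_one_iff x).mpr hx
  simp only [OpPrimeP, Subgroup.mem_comap, this]
  exact Subgroup.one_mem _

end Infra

section Transport
variable {p : ℕ} {X Y : Type*} [Group X] [Group Y]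

theorem map_map_symm (e : X ≃* Y) (H : Subgroup Y) :
    (H.map e.symm.toMonoidHom).map e.toMonoidHom = H := by
  ext y
  simp [Subgroup.mem_map_equiv]

theorem pPrimeCore_map_le (e : X ≃* Y) [Finite X] :
    (pPrimeCore p X).map e.toMonoidHom ≤ pPrimeCore p Y := by
  refine le_pPrimeCore ((pPrimeCore_normal p X).map _ e.surjective) ?_
  exact Nat.Coprime.coprime_dvd_left (card_map_dvd _ _) (pPrimeCore_coprime p X)

theorem pPrimeCore_map_equiv (e : X ≃* Y) [Finite X] :
    (pPrimeCore p X).map e.toMonoidHom = pPrimeCore p Y := by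
  haveI : Finite Y := Finite.of_equiv X e.toEquiv
  refine le_antisymm (pPrimeCore_map_le e) ?_
  conv_lhs => rw [← map_map_symm e (pPrimeCore p Y)]
  exact Subgroup.map_mono (pPrimeCore_map_le e.symm)

theorem pCore_map_le (e : X ≃* Y) [Finite X] :
    (pCore p X).map e.toMonoidHom ≤ pCore p Y := by
  refine le_pCore ((pCore_normal p X).map _ e.surjective) ?_
  exact IsPGroup.map (pCore_isPGroup p X) _

theorem pCore_map_equiv (e : X ≃* Y) [Finite X] :
    (pCore p X).map e.toMonoidHom = pCore p Y := by
  haveI : Finite Y := Finite.of_equiv X e.toEquiv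
  refine le_antisymm (pCore_map_le e) ?_
  conv_lhs => rw [← map_map_symm e (pCore p Y)]
  exact Subgroup.map_mono (pCore_map_le e.symm)

theorem OpPrimeP_map_equiv (e : X ≃* Y) [Finite X] :
    (OpPrimeP p X).map e.toMonoidHom = OpPrimeP p Y := by
  haveI : Finite Y := Finite.of_equiv X e.toEquiv
  have hcore := pPrimeCore_map_equiv (p := p) e
  set eQ := QuotientGroup.congr (pPrimeCore p X) (pPrimeCore p Y) e hcore with heQ
  have hQcore := pCore_map_equiv (p := p) eQ
  ext y
  obtain ⟨x, rfl⟩ := e.surjective y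
  rw [Subgroup.mem_map_equiv, MulEquiv.symm_apply_apply]
  show x ∈ OpPrimeP p X ↔ e x ∈ OpPrimeP p Y
  simp only [OpPrimeP, Subgroup.mem_comap]
  constructor
  · intro hx
    have : eQ (QuotientGroup.mk' (pPrimeCore p X) x) ∈ pCore p (Y ⧸ pPrimeCore p Y) := by
      rw [← hQcore]
      exact Subgroup.mem_map_of_mem _ hx
    exact this
  · intro hx
    have h2 : eQ (QuotientGroup.mk' (pPrimeCore p X) x) ∈ pCore p (Y ⧸ pPrimeCore p Y) := by
      exact hx
    rw [← hQcore, Subgroup.mem_map_equiv] at h2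
    rwa [MulEquiv.symm_apply_apply] at h2

theorem index_map_equiv (e : X ≃* Y) (H : Subgroup X) :
    (H.map e.toMonoidHom).index = H.index := by
  rw [Subgroup.index_map]
  have hker : e.toMonoidHom.ker = ⊥ := (MonoidHom.ker_eq_bot_iff _).mpr e.injective
  have hrange : e.toMonoidHom.range = ⊤ := MonoidHom.range_eq_top.mpr e.surjective
  rw [hker, hrange, sup_bot_eq, Subgroup.index_top, mul_one]

theorem cardQ_eq_of_mulEquiv (e : X ≃* Y) [Finite X] :
    Nat.card (X ⧸ OpPrimeP p X) = Nat.card (Y ⧸ OpPrimeP p Y) := by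
  rw [← Subgroup.index_eq_card, ← Subgroup.index_eq_card, ← OpPrimeP_map_equiv (p := p) e,
    index_map_equiv]

end Transport

section Stage3
variable {G : Type*} [Group G] {p : ℕ}

theorem card_comap_surjective {G' : Type*} [Group G'] {f : G →* G'} (hf : Function.Surjective f)
    (H : Subgroup G') [Finite G] :
    Nat.card (H.comap f) = Nat.card H * Nat.card f.ker := by
  set K := H.comap f with hK
  have hker : f.ker ≤ K := fun x hx => by
    simp only [hK, Subgroup.mem_comap, MonoidHom.mem_ker.mp hx, Subgroup.one_mem]
  have h1 : Nat.card K =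
      Nat.card (↥K ⧸ (f.ker).subgroupOf K) * Nat.card ((f.ker).subgroupOf K) :=
    Subgroup.card_eq_card_quotient_mul_card_subgroup _
  have h2 : Nat.card ((f.ker).subgroupOf K) = Nat.card f.ker :=
    Nat.card_congr (Subgroup.subgroupOfEquivOfLe hker).toEquiv
  have hkc : (f.comp K.subtype).ker = (f.ker).subgroupOf K := (MonoidHom.comap_ker _ _).symm
  have hrange : (f.comp K.subtype).range = H := by
    rw [MonoidHom.range_comp, Subgroup.range_subtype, Subgroup.map_comap_eq_self_of_surjective hf]
  have h3 : Nat.card (↥K ⧸ (f.ker).subgroupOf K) = Nat.card H := by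
    rw [← hkc]
    rw [Nat.card_congr (QuotientGroup.quotientKerEquivRange (f.comp K.subtype)).toEquiv, hrange]
  rw [h1, h2, h3]

theorem pPrimeCore_quotient (p : ℕ) (G : Type*) [Group G] [Finite G] :
    pPrimeCore p (G ⧸ pPrimeCore p G) = ⊥ := by
  set O := pPrimeCore p G
  set Nbar := pPrimeCore p (G ⧸ O) with hNbar
  set N := Nbar.comap (QuotientGroup.mk' O) with hN
  have hcard : Nat.card N = Nat.card Nbar * Nat.card O := by
    rw [hN, card_comap_surjective (QuotientGroup.mk'_surjective O), QuotientGroup.ker_mk']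
  have hNle : N ≤ O := by
    refine le_pPrimeCore (Subgroup.normal_comap _) ?_
    rw [hcard]
    exact Nat.Coprime.mul (pPrimeCore_coprime p _) (pPrimeCore_coprime p G)
  have : Nbar = N.map (QuotientGroup.mk' O) :=
    (Subgroup.map_comap_eq_self_of_surjective (QuotientGroup.mk'_surjective O) _).symm
  rw [this]
  refine (Subgroup.map_eq_bot_iff _).mpr ?_
  calc N ≤ O := hNle
    _ = (QuotientGroup.mk' O).ker := (QuotientGroup.ker_mk' O).symm

theorem OpPrimeP_eq_pCore_of_bot [Finite G] (h : pPrimeCore p G = ⊥) :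
    OpPrimeP p G = pCore p G := by
  have hinj : Function.Injective (QuotientGroup.mk' (pPrimeCore p G)) := by
    rw [← MonoidHom.ker_eq_bot_iff, QuotientGroup.ker_mk']
    exact h
  set e := MulEquiv.ofBijective (QuotientGroup.mk' (pPrimeCore p G))
    ⟨hinj, QuotientGroup.mk'_surjective _⟩ with he
  have hmapeq : ∀ (H : Subgroup G), H.map e.toMonoidHom = H.map (QuotientGroup.mk' (pPrimeCore p G)) := by
    intro H
    ext y
    simp only [Subgroup.mem_map]
    constructor
    · rintro ⟨x, hx, rfl⟩; exact ⟨x, hx, rfl⟩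
    · rintro ⟨x, hx, rfl⟩; exact ⟨x, hx, rfl⟩
  have hc : pCore p (G ⧸ pPrimeCore p G) = (pCore p G).map (QuotientGroup.mk' (pPrimeCore p G)) := by
    rw [← hmapeq, pCore_map_equiv (p := p) e]
  rw [OpPrimeP, hc, Subgroup.comap_map_eq_self_of_injective hinj]

theorem subgroupOf_pPrimeCore_le [Finite G] (H : Subgroup G) :
    (pPrimeCore p G).subgroupOf H ≤ pPrimeCore p ↥H := by
  refine le_pPrimeCore ((pPrimeCore_normal p G).subgroupOf H) ?_
  refine Nat.Coprime.coprime_dvd_left ?_ (pPrimeCore_coprime p G)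
  calc Nat.card ((pPrimeCore p G).subgroupOf H)
      = Nat.card (((pPrimeCore p G).subgroupOf H).map H.subtype) :=
        (Nat.card_congr (Subgroup.equivMapOfInjective _ _ H.subtype_injective).toEquiv)
    _ = Nat.card ↥(pPrimeCore p G ⊓ H) := by rw [Subgroup.subgroupOf_map_subtype]
    _ ∣ Nat.card (pPrimeCore p G) := Subgroup.card_dvd_of_le inf_le_left

theorem subgroupOf_OpPrimeP_le [Finite G] (H : Subgroup G) :
    (OpPrimeP p G).subgroupOf H ≤ OpPrimeP p ↥H := by
  set D := pPrimeCore p ↥H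
  set φ := QuotientGroup.mk' D
  set Xs := (OpPrimeP p G).subgroupOf H with hXs
  haveI : Xs.Normal := (OpPrimeP_normal p G).subgroupOf H
  have hmapnormal : (Xs.map φ).Normal := Subgroup.Normal.map inferInstance φ (QuotientGroup.mk'_surjective D)
  have hmapp : IsPGroup p (Xs.map φ) := by
    rintro ⟨y, hy⟩
    rw [Subgroup.mem_map] at hy
    obtain ⟨x, hx, rfl⟩ := hy
    have hxG : (x : G) ∈ OpPrimeP p G := hx
    rw [OpPrimeP, Subgroup.mem_comap] at hxG
    obtain ⟨k, hk⟩ := pCore_isPGroup p (G ⧸ pPrimeCore p G) ⟨_, hxG⟩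
    have hk' : (QuotientGroup.mk' (pPrimeCore p G) (x : G)) ^ (p ^ k) = 1 := by
      have := congrArg Subtype.val hk
      simpa using this
    rw [← map_pow, QuotientGroup.mk'_apply, QuotientGroup.eq_one_iff] at hk'
    have hxk : x ^ (p ^ k) ∈ D := by
      apply subgroupOf_pPrimeCore_le H
      show ((x ^ (p ^ k) : ↥H) : G) ∈ pPrimeCore p G
      push_cast
      exact hk'
    refine ⟨k, ?_⟩
    apply Subtype.ext
    push_cast
    rw [← map_pow]
    exact (QuotientGroup.eq_one_iff _).mpr hxk
  have hle : Xs.map φ ≤ pCore p (↥H ⧸ D) := le_pCore hmapnormal hmapp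
  calc Xs ≤ (Xs.map φ).comap φ := Subgroup.le_comap_map φ Xs
    _ ≤ (pCore p (↥H ⧸ D)).comap φ := Subgroup.comap_mono hle
    _ = OpPrimeP p ↥H := rfl

theorem map_mk'_pPrimeCore_le [Finite G] (N : Subgroup G) [N.Normal] :
    (pPrimeCore p G).map (QuotientGroup.mk' N) ≤ pPrimeCore p (G ⧸ N) := by
  refine le_pPrimeCore ((pPrimeCore_normal p G).map _ (QuotientGroup.mk'_surjective N)) ?_
  exact Nat.Coprime.coprime_dvd_left (card_map_dvd _ _) (pPrimeCore_coprime p G)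

theorem map_mk'_OpPrimeP_le [Finite G] (N : Subgroup G) [N.Normal] :
    (OpPrimeP p G).map (QuotientGroup.mk' N) ≤ OpPrimeP p (G ⧸ N) := by
  set D := pPrimeCore p (G ⧸ N)
  set φ := QuotientGroup.mk' D
  set Y := (OpPrimeP p G).map (QuotientGroup.mk' N) with hY
  haveI : Y.Normal := Subgroup.Normal.map inferInstance _ (QuotientGroup.mk'_surjective N)
  have hmapnormal : (Y.map φ).Normal := Subgroup.Normal.map inferInstance φ (QuotientGroup.mk'_surjective D)
  have hmapp : IsPGroup p (Y.map φ) := by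
    rintro ⟨z, hz⟩
    rw [Subgroup.mem_map] at hz
    obtain ⟨y, hy, rfl⟩ := hz
    rw [hY, Subgroup.mem_map] at hy
    obtain ⟨x, hx, rfl⟩ := hy
    rw [OpPrimeP, Subgroup.mem_comap] at hx
    obtain ⟨k, hk⟩ := pCore_isPGroup p (G ⧸ pPrimeCore p G) ⟨_, hx⟩
    have hk' : (QuotientGroup.mk' (pPrimeCore p G) x) ^ (p ^ k) = 1 := by
      have := congrArg Subtype.val hk
      simpa using this
    rw [← map_pow, QuotientGroup.mk'_apply, QuotientGroup.eq_one_iff] at hk'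
    have hxk : QuotientGroup.mk' N (x ^ (p ^ k)) ∈ D :=
      map_mk'_pPrimeCore_le N (Subgroup.mem_map_of_mem _ hk')
    refine ⟨k, ?_⟩
    apply Subtype.ext
    push_cast
    rw [← map_pow, ← map_pow]
    exact (QuotientGroup.eq_one_iff _).mpr hxk
  have hle : Y.map φ ≤ pCore p ((G ⧸ N) ⧸ D) := le_pCore hmapnormal hmapp
  calc Y ≤ (Y.map φ).comap φ := Subgroup.le_comap_map φ Y
    _ ≤ (pCore p ((G ⧸ N) ⧸ D)).comap φ := Subgroup.comap_mono hle
    _ = OpPrimeP p (G ⧸ N) := rfl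

theorem cardQ_subgroup_dvd [Finite G] (H : Subgroup G) :
    Nat.card (↥H ⧸ OpPrimeP p ↥H) ∣ Nat.card (G ⧸ OpPrimeP p G) := by
  rw [← Subgroup.index_eq_card, ← Subgroup.index_eq_card]
  calc (OpPrimeP p ↥H).index ∣ ((OpPrimeP p G).subgroupOf H).index :=
        Subgroup.index_dvd_of_le (subgroupOf_OpPrimeP_le H)
    _ = (OpPrimeP p G).relIndex H := rfl
    _ ∣ (OpPrimeP p G).index := Subgroup.relIndex_dvd_index_of_normal _ _

theorem cardQ_quotient_dvd [Finite G] (N : Subgroup G) [N.Normal] :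
    Nat.card ((G ⧸ N) ⧸ OpPrimeP p (G ⧸ N)) ∣ Nat.card (G ⧸ OpPrimeP p G) := by
  rw [← Subgroup.index_eq_card, ← Subgroup.index_eq_card]
  calc (OpPrimeP p (G ⧸ N)).index
      ∣ ((OpPrimeP p G).map (QuotientGroup.mk' N)).index :=
        Subgroup.index_dvd_of_le (map_mk'_OpPrimeP_le N)
    _ ∣ (OpPrimeP p G).index := by
        rw [Subgroup.index_map]
        have : ((QuotientGroup.mk' N)).range.index = 1 := by
          rw [MonoidHom.range_eq_top.mpr (QuotientGroup.mk'_surjective N), Subgroup.index_top]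
        rw [this, mul_one]
        exact Subgroup.index_dvd_of_le le_sup_left

theorem cardQ_quotient_pPrimeCore (p : ℕ) (G : Type*) [Group G] [Finite G] :
    Nat.card ((G ⧸ pPrimeCore p G) ⧸ OpPrimeP p (G ⧸ pPrimeCore p G)) =
      Nat.card (G ⧸ OpPrimeP p G) := by
  have h1 : OpPrimeP p (G ⧸ pPrimeCore p G) = pCore p (G ⧸ pPrimeCore p G) :=
    OpPrimeP_eq_pCore_of_bot (pPrimeCore_quotient p G)
  have h2 : pCore p (G ⧸ pPrimeCore p G) =
      (OpPrimeP p G).map (QuotientGroup.mk' (pPrimeCore p G)) :=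
    (Subgroup.map_comap_eq_self_of_surjective (QuotientGroup.mk'_surjective _) _).symm
  rw [h1, h2]
  exact Nat.card_congr (QuotientGroup.quotientQuotientEquivQuotient _ _
    (pPrimeCore_le_OpPrimeP p G)).toEquiv

end Stage3

section MinNormal
variable {G : Type*} [Group G]

theorem commutator_ne_top_of_solvable (X : Type*) [Group X] [Group.IsSolvable X] [Nontrivial X] :
    commutator X ≠ ⊤ := by
  intro h
  have hds : ∀ n, derivedSeries X n = ⊤ := by
    intro n
    induction n with
    | zero => exact derivedSeries_zero X
    | succ n ih => rw [derivedSeries_succ, ih, ← commutator_def, h]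
  obtain ⟨n, hn⟩ := Group.IsSolvable.solvable (G := X)
  rw [hds n] at hn
  obtain ⟨x, y, hxy⟩ := exists_pair_ne X
  apply hxy
  have hx : x ∈ (⊥ : Subgroup X) := hn ▸ Subgroup.mem_top x
  have hy : y ∈ (⊥ : Subgroup X) := hn ▸ Subgroup.mem_top y
  rw [Subgroup.mem_bot] at hx hy
  rw [hx, hy]

/-- Every nontrivial normal subgroup of a finite solvable group contains a nontrivial
abelian normal `s`-subgroup for some prime `s`. -/
theorem exists_normal_pgroup_le [Finite G] [Group.IsSolvable G] {C : Subgroup G}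
    (hC : C.Normal) (hCbot : C ≠ ⊥) :
    ∃ M : Subgroup G, M.Normal ∧ M ≠ ⊥ ∧ M ≤ C ∧ (∀ x ∈ M, ∀ y ∈ M, Commute x y) ∧
      ∃ s : ℕ, s.Prime ∧ IsPGroup s M := by
  classical
  set 𝒮 : Set (Subgroup G) := {N | N.Normal ∧ N ≠ ⊥ ∧ N ≤ C} with h𝒮
  have hne : 𝒮.Nonempty := ⟨C, hC, hCbot, le_rfl⟩
  obtain ⟨M, hM, hMmin⟩ := Set.exists_min_image 𝒮 (fun N => Nat.card N) (Set.toFinite _) hne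
  obtain ⟨hMnorm, hMbot, hMC⟩ := hM
  haveI := hMnorm
  -- minimality: any member of 𝒮 below M equals M
  have hmin : ∀ N ∈ 𝒮, N ≤ M → N = M := by
    intro N hN hle
    exact Subgroup.eq_of_le_of_card_ge hle (hMmin N hN)
  -- M is abelian
  have hcomm : ⁅M, M⁆ = ⊥ := by
    by_contra hbot
    have hle : ⁅M, M⁆ ≤ M := Subgroup.commutator_le_left M M
    have heq : ⁅M, M⁆ = M := hmin _ ⟨Subgroup.commutator_normal M M, hbot, hle.trans hMC⟩ hle
    -- contradiction with solvability of M
    haveI : Nontrivial M := by rwa [← Subgroup.nontrivial_iff_ne_bot] at hMbot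
    apply commutator_ne_top_of_solvable M
    have htop : Subgroup.map M.subtype ⊤ = M := by
      rw [← MonoidHom.range_eq_map]
      exact Subgroup.range_subtype M
    have heq2 : Subgroup.map M.subtype (commutator ↥M) = Subgroup.map M.subtype ⊤ := by
      rw [commutator_def, Subgroup.map_commutator, htop, heq]
    exact Subgroup.map_injective M.subtype_injective heq2
  have hcommute : ∀ x ∈ M, ∀ y ∈ M, Commute x y := by
    intro x hx y hy
    have := Subgroup.commutator_eq_bot_iff_le_centralizer.mp hcomm hx
    exact (Subgroup.mem_centralizer_iff.mp this y hy).symm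
  -- a prime dividing card M
  have hcard : Nat.card M ≠ 1 := by
    have := (Subgroup.one_lt_card_iff_ne_bot M).mpr hMbot
    omega
  obtain ⟨s, hs, hsd⟩ := Nat.exists_prime_and_dvd hcard
  -- the s-primary component of M
  set T : Subgroup G :=
    { carrier := {x | x ∈ M ∧ ∃ k, x ^ s ^ k = 1}
      one_mem' := ⟨M.one_mem, 0, one_pow _⟩
      mul_mem' := by
        rintro x y ⟨hxM, kx, hkx⟩ ⟨hyM, ky, hky⟩
        refine ⟨M.mul_mem hxM hyM, kx + ky, ?_⟩
        rw [(hcommute x hxM y hyM).mul_pow]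
        have h1 : x ^ s ^ (kx + ky) = 1 := by
          rw [pow_add, pow_mul, hkx, one_pow]
        have h2 : y ^ s ^ (kx + ky) = 1 := by
          rw [pow_add, Nat.mul_comm, pow_mul, hky, one_pow]
        rw [h1, h2, one_mul]
      inv_mem' := by
        rintro x ⟨hxM, k, hk⟩
        exact ⟨M.inv_mem hxM, k, by rw [inv_pow, hk, inv_one]⟩ } with hT
  have hTM : T ≤ M := fun x hx => hx.1
  have hTnorm : T.Normal := by
    constructor
    rintro x ⟨hxM, k, hk⟩ g
    refine ⟨hMnorm.conj_mem x hxM g, k, ?_⟩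
    rw [conj_pow, hk, mul_one, mul_inv_cancel]
  have hTp : IsPGroup s T := by
    rintro ⟨x, hxM, k, hk⟩
    exact ⟨k, Subtype.ext (by push_cast; exact hk)⟩
  have hTbot : T ≠ ⊥ := by
    haveI : Fintype M := Fintype.ofFinite _
    have hsd' : s ∣ Fintype.card M := by rwa [← Nat.card_eq_fintype_card]
    haveI : Fact s.Prime := ⟨hs⟩
    obtain ⟨x, hx⟩ := exists_prime_orderOf_dvd_card s hsd'
    intro hbot
    have hxT : (x : G) ∈ T := by
      refine ⟨x.2, 1, ?_⟩
      have := pow_orderOf_eq_one x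
      rw [hx] at this
      rw [pow_one]
      exact_mod_cast congrArg Subtype.val this
    rw [hbot, Subgroup.mem_bot] at hxT
    have : x = 1 := by exact_mod_cast Subtype.ext hxT
    rw [this, orderOf_one] at hx
    exact hs.one_lt.ne hx
  have hTeq : T = M := hmin T ⟨hTnorm, hTbot, hTM.trans hMC⟩ hTM
  exact ⟨M, hMnorm, hMbot, hMC, hcommute, s, hs, hTeq ▸ hTp⟩

end MinNormal

section Coprime
variable {G : Type*} [Group G]

/-- A normal p-subgroup is contained in every subgroup of index coprime to p. -/
theorem normal_pgroup_le_of_coprime_index [Finite G] {p : ℕ} (hp : p.Prime)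
    {P K : Subgroup G} [P.Normal] (hP : IsPGroup p P) (hK : (K.index).Coprime p) :
    P ≤ K := by
  haveI : Fact p.Prime := ⟨hp⟩
  have e := QuotientGroup.quotientInfEquivProdNormalQuotient K P
  set a := Nat.card (↥K ⧸ P.subgroupOf K) with ha
  set b := Nat.card (P.subgroupOf K) with hb
  set r := K.relIndex (K ⊔ P) with hr
  have hcardK : Nat.card K = a * b := Subgroup.card_eq_card_quotient_mul_card_subgroup _
  have hcardJ : Nat.card ↥(K ⊔ P) = a * Nat.card P := by
    have h1 : Nat.card ↥(K ⊔ P) =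
        Nat.card (↥(K ⊔ P) ⧸ P.subgroupOf (K ⊔ P)) * Nat.card (P.subgroupOf (K ⊔ P)) :=
      Subgroup.card_eq_card_quotient_mul_card_subgroup _
    have h2 : Nat.card (P.subgroupOf (K ⊔ P)) = Nat.card P :=
      Nat.card_congr (Subgroup.subgroupOfEquivOfLe le_sup_right).toEquiv
    have h3 : a = Nat.card (↥(K ⊔ P) ⧸ P.subgroupOf (K ⊔ P)) := Nat.card_congr e.toEquiv
    rw [h1, h2, ← h3]
  have hrel : r * Nat.card K = Nat.card ↥(K ⊔ P) := by
    have h1 : Nat.card ↥(K ⊔ P) =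
        Nat.card (↥(K ⊔ P) ⧸ K.subgroupOf (K ⊔ P)) * Nat.card (K.subgroupOf (K ⊔ P)) :=
      Subgroup.card_eq_card_quotient_mul_card_subgroup _
    have h2 : Nat.card (K.subgroupOf (K ⊔ P)) = Nat.card K :=
      Nat.card_congr (Subgroup.subgroupOfEquivOfLe le_sup_left).toEquiv
    rw [h1, h2, hr, Subgroup.relIndex, Subgroup.index_eq_card]
  have hapos : 0 < a := Nat.card_pos
  have hrb : r * b = Nat.card P := by
    have : a * (r * b) = a * Nat.card P := by
      rw [← hcardJ, ← hrel, hcardK]; ring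
    exact Nat.eq_of_mul_eq_mul_left hapos this
  have hrdvd : r ∣ Nat.card P := ⟨b, hrb.symm⟩
  obtain ⟨n, hn⟩ := (IsPGroup.iff_card).mp hP
  have hrcop : r.Coprime p := by
    have : r ∣ K.index := by
      have := Subgroup.relIndex_mul_index (le_sup_left : K ≤ K ⊔ P)
      exact ⟨(K ⊔ P).index, this.symm⟩
    exact Nat.Coprime.coprime_dvd_left this hK
  have hr1 : r = 1 := by
    refine Nat.Coprime.eq_one_of_dvd ?_ (hn ▸ hrdvd)
    exact Nat.Coprime.pow_right n hrcop
  have htop : K.subgroupOf (K ⊔ P) = ⊤ := by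
    rw [← Subgroup.index_eq_one]
    exact hr1
  have : K ⊔ P ≤ K := Subgroup.subgroupOf_eq_top.mp htop
  exact le_sup_right.trans this

end Coprime

section Centralizer
variable {G : Type*} [Group G]

theorem centralizer_normal_of_normal {H : Subgroup G} (hH : H.Normal) :
    (Subgroup.centralizer (H : Set G)).Normal := by
  constructor
  intro n hn g
  rw [Subgroup.mem_centralizer_iff] at hn ⊢
  intro h hh
  have h' : g⁻¹ * h * g ∈ H := by
    have := hH.conj_mem h hh g⁻¹
    simpa using this
  have hcomm := hn _ h'
  calc h * (g * n * g⁻¹) = g * ((g⁻¹ * h * g) * n) * g⁻¹ := by group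
    _ = g * (n * (g⁻¹ * h * g)) * g⁻¹ := by rw [hcomm]
    _ = (g * n * g⁻¹) * h := by group

theorem dvd_coprime_eq_one {d a b : ℕ} (ha : d ∣ a) (hb : d ∣ b) (hab : a.Coprime b) : d = 1 :=
  Nat.eq_one_of_dvd_coprimes hab ha hb

/-- If `G` is finite solvable with trivial `p'`-core, then the centralizer of
`O_p(G)` is contained in `O_p(G)`. -/
theorem centralizer_pCore_le (p : ℕ) (G : Type*) [Group G] [Finite G] [Group.IsSolvable G]
    (hp : p.Prime) (hO : pPrimeCore p G = ⊥) :
    Subgroup.centralizer ((pCore p G : Subgroup G) : Set G) ≤ pCore p G := by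
  haveI : Fact p.Prime := ⟨hp⟩
  by_contra hnle
  set P := pCore p G with hP
  set C := Subgroup.centralizer (P : Set G) with hCdef
  haveI hCnorm : C.Normal := centralizer_normal_of_normal (pCore_normal p G)
  set Z := C ⊓ P with hZdef
  haveI hZnorm : Z.Normal :=
    { conj_mem := fun n hn g => ⟨hCnorm.conj_mem n hn.1 g, (pCore_normal p G).conj_mem n hn.2 g⟩ }
  set φ := QuotientGroup.mk' Z with hφ
  set Cb := C.map φ with hCb
  haveI : Cb.Normal := Subgroup.Normal.map hCnorm φ (QuotientGroup.mk'_surjective Z)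
  have hCbbot : Cb ≠ ⊥ := by
    intro h
    rw [Subgroup.map_eq_bot_iff, hφ, QuotientGroup.ker_mk'] at h
    exact hnle (fun x hx => (h hx).2)
  obtain ⟨Mb, hMbnorm, hMbbot, hMbC, _, s, hs, hMbp⟩ :=
    exists_normal_pgroup_le (G := G ⧸ Z) inferInstance hCbbot
  haveI : Fact s.Prime := ⟨hs⟩
  set M := Mb.comap φ with hM
  haveI hMnorm : M.Normal := Subgroup.normal_comap φ
  have hZM : Z ≤ M := by
    intro z hz
    have h1 : φ z = 1 := (QuotientGroup.eq_one_iff z).mpr hz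
    simp only [hM, Subgroup.mem_comap, h1]
    exact Subgroup.one_mem _
  have hmapM : M.map φ = Mb :=
    Subgroup.map_comap_eq_self_of_surjective (QuotientGroup.mk'_surjective Z) _
  have hMC : M ≤ C := by
    have h1 : M ≤ Cb.comap φ := Subgroup.comap_mono hMbC
    rw [hCb, Subgroup.comap_map_eq, hφ, QuotientGroup.ker_mk'] at h1
    rwa [sup_of_le_left (inf_le_left : Z ≤ C)] at h1
  have hcardM : Nat.card M = Nat.card Mb * Nat.card Z := by
    rw [hM, card_comap_surjective (QuotientGroup.mk'_surjective Z), QuotientGroup.ker_mk']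
  have hZp : IsPGroup p Z := (pCore_isPGroup p G).to_le inf_le_right
  have hZcentral : ∀ m ∈ M, ∀ z ∈ Z, m * z = z * m := by
    intro m hm z hz
    exact (Subgroup.mem_centralizer_iff.mp (hMC hm) z ((inf_le_right : C ⊓ P ≤ P) hz)).symm
  obtain ⟨nM, hnM⟩ := (IsPGroup.iff_card).mp hMbp
  obtain ⟨nZ, hnZ⟩ := (IsPGroup.iff_card).mp hZp
  have hMbcard_pos : 1 < Nat.card Mb := (Subgroup.one_lt_card_iff_ne_bot Mb).mpr hMbbot
  by_cases hsp : s = p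
  · subst hsp
    have hMp : IsPGroup s M := by
      rw [IsPGroup.iff_card]
      exact ⟨nM + nZ, by rw [hcardM, hnM, hnZ, pow_add]⟩
    have hMP : M ≤ P := le_pCore hMnorm hMp
    have hMZ : M ≤ Z := le_inf hMC hMP
    have : Mb = ⊥ := by
      rw [← hmapM, Subgroup.map_eq_bot_iff, hφ, QuotientGroup.ker_mk']
      exact hMZ
    exact hMbbot this
  · -- Schur–Zassenhaus complement
    have hps : (p : ℕ).Coprime s := (Nat.coprime_primes hp hs).mpr (fun h => hsp h.symm)
    set ZM := Z.subgroupOf M with hZMdef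
    haveI : ZM.Normal := Subgroup.Normal.subgroupOf hZnorm M
    have hcardZM : Nat.card ZM = Nat.card Z :=
      Nat.card_congr (Subgroup.subgroupOfEquivOfLe hZM).toEquiv
    have hZpos : 0 < Nat.card Z := Nat.card_pos
    have hindexZM : ZM.index = Nat.card Mb := by
      have h1 := Subgroup.index_mul_card ZM
      rw [hcardZM, hcardM] at h1
      exact Nat.eq_of_mul_eq_mul_right hZpos h1
    have hcop : (Nat.card ZM).Coprime ZM.index := by
      rw [hcardZM, hindexZM, hnZ, hnM]
      exact Nat.Coprime.pow _ _ hps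
    obtain ⟨Hc, hHc⟩ := Subgroup.exists_right_complement'_of_coprime hcop
    have hcardHc : Nat.card Hc = Nat.card Mb := by
      have h1 := hHc.card_mul
      rw [hcardZM, hcardM, Nat.mul_comm (Nat.card Z) (Nat.card Hc)] at h1
      exact Nat.eq_of_mul_eq_mul_right hZpos h1
    have hHcp : IsPGroup s Hc := (IsPGroup.iff_card).mpr ⟨nM, by rw [hcardHc, hnM]⟩
    set T := Hc.map M.subtype with hT
    have hTM : T ≤ M := by
      rw [hT]
      rintro x ⟨y, _, rfl⟩
      exact y.2
    have hTp : IsPGroup s T := hHcp.map _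
    -- every s-element of M lies in T
    have hsel : ∀ x : G, x ∈ M → (∃ k, x ^ s ^ k = 1) → x ∈ T := by
      rintro x hxM ⟨k, hk⟩
      obtain ⟨⟨z, t⟩, hzt⟩ := (hHc.existsUnique (⟨x, hxM⟩ : ↥M)).exists
      set zG : G := ((z : ↥M) : G) with hzG
      set tG : G := ((t : ↥M) : G) with htG
      have hzZ : zG ∈ Z := z.2
      have htT : tG ∈ T := ⟨(t : ↥M), t.2, rfl⟩
      have hxzt : zG * tG = x := by
        have := congrArg (Subtype.val : ↥M → G) hzt
        exact this
      have hcommzt : Commute zG tG := by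
        have := hZcentral tG ((t : ↥M)).2 zG hzZ
        exact this.symm
      obtain ⟨j, hj⟩ : ∃ j, zG ^ p ^ j = 1 := by
        obtain ⟨j, hj⟩ := hZp ⟨zG, hzZ⟩
        exact ⟨j, by have := congrArg (Subtype.val : ↥Z → G) hj; simpa using this⟩
      obtain ⟨m, hm⟩ : ∃ m, tG ^ s ^ m = 1 := by
        obtain ⟨m, hm⟩ := hTp ⟨tG, htT⟩
        exact ⟨m, by have := congrArg (Subtype.val : ↥T → G) hm; simpa using this⟩
      -- w := zG ^ (s ^ k) equals (tG ^ (s ^ k))⁻¹ and is trivial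
      have hw : zG ^ s ^ k * tG ^ s ^ k = 1 := by
        rw [← hcommzt.mul_pow, hxzt, hk]
      have hw1 : zG ^ s ^ k = (tG ^ s ^ k)⁻¹ := by
        rw [eq_inv_iff_mul_eq_one]
        exact hw
      have hwp : (zG ^ s ^ k) ^ p ^ j = 1 := by
        rw [← pow_mul, Nat.mul_comm, pow_mul, hj, one_pow]
      have hws : (zG ^ s ^ k) ^ s ^ m = 1 := by
        rw [hw1, inv_pow, ← pow_mul, Nat.mul_comm, pow_mul, hm, one_pow, inv_one]
      have hwone : zG ^ s ^ k = 1 := by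
        rw [← orderOf_eq_one_iff]
        refine dvd_coprime_eq_one (orderOf_dvd_of_pow_eq_one hwp) (orderOf_dvd_of_pow_eq_one hws) ?_
        exact Nat.Coprime.pow _ _ hps
      have hzone : zG = 1 := by
        rw [← orderOf_eq_one_iff]
        refine dvd_coprime_eq_one (orderOf_dvd_of_pow_eq_one hj) (orderOf_dvd_of_pow_eq_one hwone) ?_
        exact Nat.Coprime.pow _ _ hps
      rw [← hxzt, hzone, one_mul]
      exact htT
    have hTnorm : T.Normal := by
      constructor
      intro x hx g
      refine hsel _ (hMnorm.conj_mem x (hTM hx) g) ?_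
      obtain ⟨k, hk⟩ := hTp ⟨x, hx⟩
      have hk' : x ^ s ^ k = 1 := by
        have := congrArg (Subtype.val : ↥T → G) hk
        simpa using this
      exact ⟨k, by rw [conj_pow, hk', mul_one, mul_inv_cancel]⟩
    have hTcop : (Nat.card T).Coprime p := by
      have : Nat.card T = Nat.card Hc :=
        (Nat.card_congr (Subgroup.equivMapOfInjective _ _ M.subtype_injective).toEquiv).symm
      rw [this, hcardHc, hnM]
      exact Nat.Coprime.pow_left _ (Nat.coprime_comm.mp hps)
    have hTbot : T = ⊥ := le_bot_iff.mp (hO ▸ le_pPrimeCore hTnorm hTcop)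
    have hcardT : Nat.card T = Nat.card Hc :=
      (Nat.card_congr (Subgroup.equivMapOfInjective _ _ M.subtype_injective).toEquiv).symm
    rw [hTbot, Subgroup.card_bot] at hcardT
    omega
end Centralizer

section Hall
universe u

/-- Existence of Hall π-subgroups in finite solvable groups. -/
theorem exists_hall_aux (π : Set ℕ) :
    ∀ n : ℕ, ∀ (G : Type u) [Group G] [Finite G] [Group.IsSolvable G], Nat.card G ≤ n →
    ∃ K : Subgroup G, (∀ t : ℕ, t.Prime → t ∣ Nat.card K → t ∈ π) ∧
      (∀ t ∈ π, t.Prime → ¬ t ∣ K.index) := by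
  intro n
  induction n with
  | zero =>
    intro G _ _ _ hcard
    have : 0 < Nat.card G := Nat.card_pos
    omega
  | succ n IH =>
    intro G _ _ _ hcard
    by_cases hle : Nat.card G ≤ n
    · exact IH G hle
    -- nontrivial?
    by_cases htriv : Nat.card G = 1
    · refine ⟨⊥, ?_, ?_⟩
      · intro t ht htd
        rw [Subgroup.card_bot, Nat.dvd_one] at htd
        exact absurd htd ht.ne_one
      · intro t _ ht htd
        rw [Subgroup.index_bot, htriv, Nat.dvd_one] at htd
        exact ht.ne_one htd
    have hGpos : 0 < Nat.card G := Nat.card_pos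
    have htopbot : (⊤ : Subgroup G) ≠ ⊥ := by
      intro h
      have : Nat.card (⊤ : Subgroup G) = 1 := by rw [h, Subgroup.card_bot]
      rw [Subgroup.card_top] at this
      exact htriv this
    obtain ⟨N, hNnorm, hNbot, -, -, s, hs, hNp⟩ :=
      exists_normal_pgroup_le (G := G) inferInstance htopbot
    haveI := hNnorm
    haveI : Fact s.Prime := ⟨hs⟩
    obtain ⟨a, hNa⟩ := (IsPGroup.iff_card).mp hNp
    have hNgt : 1 < Nat.card N := (Subgroup.one_lt_card_iff_ne_bot N).mpr hNbot
    have hquotcard : Nat.card G = Nat.card (G ⧸ N) * Nat.card N :=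
      Subgroup.card_eq_card_quotient_mul_card_subgroup N
    have hquotlt : Nat.card (G ⧸ N) ≤ n := by
      have hqpos : 0 < Nat.card (G ⧸ N) := Nat.card_pos
      nlinarith [hquotcard, hNgt, hqpos, hcard]
    obtain ⟨Kb, hKbcard, hKbindex⟩ := IH (G ⧸ N) hquotlt
    by_cases hsπ : s ∈ π
    · -- pull back
      refine ⟨Kb.comap (QuotientGroup.mk' N), ?_, ?_⟩
      · intro t ht htd
        rw [card_comap_surjective (QuotientGroup.mk'_surjective N), QuotientGroup.ker_mk'] at htd
        rcases (Nat.Prime.dvd_mul ht).mp htd with h | h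
        · exact hKbcard t ht h
        · rw [hNa] at h
          have : t = s := (Nat.prime_dvd_prime_iff_eq ht hs).mp (ht.dvd_of_dvd_pow h)
          rwa [this]
      · intro t htπ ht
        rw [Subgroup.index_comap_of_surjective _ (QuotientGroup.mk'_surjective N)]
        exact hKbindex t htπ ht
    · set V := Kb.comap (QuotientGroup.mk' N) with hV
      have hVindex : V.index = Kb.index :=
        Subgroup.index_comap_of_surjective _ (QuotientGroup.mk'_surjective N)
      by_cases hVtop : V = ⊤
      · -- G/N is a π-group; Schur-Zassenhaus
        have hKbtop : Kb = ⊤ := by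
          have := Subgroup.map_comap_eq_self_of_surjective (QuotientGroup.mk'_surjective N) Kb
          rw [← hV, hVtop] at this
          rw [← this]
          exact Subgroup.map_top_of_surjective _ (QuotientGroup.mk'_surjective N)
        have hquotπ : ∀ t : ℕ, t.Prime → t ∣ Nat.card (G ⧸ N) → t ∈ π := by
          intro t ht htd
          refine hKbcard t ht ?_
          rw [hKbtop, Subgroup.card_top]
          exact htd
        have hcop : (Nat.card N).Coprime N.index := by
          rw [hNa, Subgroup.index_eq_card]
          refine Nat.Coprime.pow_left _ ?_
          rw [Nat.Prime.coprime_iff_not_dvd hs]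
          intro hdvd
          exact hsπ (hquotπ s hs hdvd)
        obtain ⟨Kc, hKc⟩ := Subgroup.exists_right_complement'_of_coprime hcop
        have hKccard : Nat.card Kc * Nat.card N = Nat.card G := by
          rw [← hKc.card_mul, Nat.mul_comm]
        have hNpos : 0 < Nat.card N := Nat.card_pos
        have hKcpos : 0 < Nat.card Kc := Nat.card_pos
        refine ⟨Kc, ?_, ?_⟩
        · intro t ht htd
          refine hquotπ t ht ?_
          have h1 : Nat.card Kc = Nat.card (G ⧸ N) := by
            have := hquotcard
            nlinarith [hKccard]
          rwa [← h1]
        · intro t htπ htp htd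
          have hKcindex : Kc.index = Nat.card N := by
            have h2 := Subgroup.index_mul_card Kc
            nlinarith [hKccard, h2]
          rw [hKcindex, hNa] at htd
          have : t = s := (Nat.prime_dvd_prime_iff_eq htp hs).mp (htp.dvd_of_dvd_pow htd)
          rw [this] at htπ
          exact hsπ htπ
      · -- recurse into V
        have hVcard : Nat.card V < Nat.card G := by
          have h1 := Subgroup.index_mul_card V
          have h2 : V.index ≠ 1 := fun h => hVtop (Subgroup.index_eq_one.mp h)
          have h3 : 0 < V.index := Nat.pos_of_ne_zero (by
            intro h
            rw [h, Nat.zero_mul] at h1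
            omega)
          have h4 : 0 < Nat.card V := Nat.card_pos
          have h2' : 2 ≤ V.index := by omega
          nlinarith
        obtain ⟨K₀, hK₀card, hK₀index⟩ := IH ↥V (by omega)
        refine ⟨K₀.map V.subtype, ?_, ?_⟩
        · intro t ht htd
          rw [← Nat.card_congr (Subgroup.equivMapOfInjective _ _ V.subtype_injective).toEquiv] at htd
          exact hK₀card t ht htd
        · intro t htπ htp
          have hmapcard : Nat.card (K₀.map V.subtype) = Nat.card K₀ :=
            (Nat.card_congr (Subgroup.equivMapOfInjective _ _ V.subtype_injective).toEquiv).symm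
          have hKpos : 0 < Nat.card K₀ := Nat.card_pos
          have hindexeq : (K₀.map V.subtype).index = K₀.index * V.index := by
            have h1 := Subgroup.index_mul_card (K₀.map V.subtype)
            have h2 := Subgroup.index_mul_card K₀
            have h3 := Subgroup.index_mul_card V
            rw [hmapcard] at h1
            -- h1 : idx * cK = card G, h2 : idxK * cK = card V, h3: idxV * cV = card G
            have h4 : (K₀.index * V.index) * Nat.card K₀ = Nat.card G := by
              calc (K₀.index * V.index) * Nat.card K₀ = (K₀.index * Nat.card K₀) * V.index := by ring
                _ = Nat.card V * V.index := by rw [h2]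
                _ = Nat.card G := by rw [Nat.mul_comm]; exact h3
            exact Nat.eq_of_mul_eq_mul_right hKpos (h1.trans h4.symm)
          rw [hindexeq]
          intro hdvd
          rcases (Nat.Prime.dvd_mul htp).mp hdvd with h | h
          · exact hK₀index t htπ htp h
          · rw [hVindex] at h
            exact hKbindex t htπ htp h

theorem exists_hall (π : Set ℕ) (G : Type u) [Group G] [Finite G] [Group.IsSolvable G] :
    ∃ K : Subgroup G, (∀ t : ℕ, t.Prime → t ∣ Nat.card K → t ∈ π) ∧
      (∀ t ∈ π, t.Prime → ¬ t ∣ K.index) :=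
  exists_hall_aux π (Nat.card G) G le_rfl

end Hall

section SubLemmas
variable {G : Type*} [Group G]

/-- In a finite solvable group with trivial p'-core, every subgroup of index
coprime to p also has trivial p'-core. -/
theorem pPrimeCore_subgroup_eq_bot [Finite G] [Group.IsSolvable G] {p : ℕ} (hp : p.Prime)
    (hO : pPrimeCore p G = ⊥) {K : Subgroup G} (hK : ¬ p ∣ K.index) :
    pPrimeCore p ↥K = ⊥ := by
  set P := pCore p G with hPdef
  have hKcop : (K.index).Coprime p := Nat.coprime_comm.mp ((Nat.Prime.coprime_iff_not_dvd hp).mpr hK)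
  have hPK : P ≤ K := normal_pgroup_le_of_coprime_index hp (pCore_isPGroup p G) hKcop
  set D := pPrimeCore p ↥K with hDdef
  set D' := D.map K.subtype with hD'def
  have hcardD' : Nat.card D' = Nat.card D :=
    (Nat.card_congr (Subgroup.equivMapOfInjective _ _ K.subtype_injective).toEquiv).symm
  have hDcop : (Nat.card D).Coprime p := pPrimeCore_coprime p ↥K
  haveI : Fact p.Prime := ⟨hp⟩
  obtain ⟨np, hnp⟩ := (IsPGroup.iff_card).mp (pCore_isPGroup p G)
  -- disjointness of D and P.subgroupOf K inside K
  have hcardPK : Nat.card (P.subgroupOf K) = Nat.card P := by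
    have h1 : Nat.card (P.subgroupOf K) = Nat.card ↥(P ⊓ K) := by
      rw [← Subgroup.subgroupOf_map_subtype]
      exact (Nat.card_congr (Subgroup.equivMapOfInjective _ _ K.subtype_injective).toEquiv)
    rw [h1, inf_of_le_left hPK]
  have hdisj : Disjoint D (P.subgroupOf K) := by
    rw [disjoint_iff]
    rw [← Subgroup.card_eq_one]
    have h1 : Nat.card ↥(D ⊓ P.subgroupOf K) ∣ Nat.card D := Subgroup.card_dvd_of_le inf_le_left
    have h2 : Nat.card ↥(D ⊓ P.subgroupOf K) ∣ Nat.card (P.subgroupOf K) :=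
      Subgroup.card_dvd_of_le inf_le_right
    rw [hcardPK, hnp] at h2
    refine dvd_coprime_eq_one h1 h2 ?_
    exact Nat.Coprime.pow_right _ hDcop
  haveI : (P.subgroupOf K).Normal := Subgroup.Normal.subgroupOf (pCore_normal p G) K
  have hcomm := Subgroup.commute_of_normal_of_disjoint D (P.subgroupOf K)
    inferInstance inferInstance hdisj
  have hD'cent : D' ≤ Subgroup.centralizer (P : Set G) := by
    rintro x ⟨d, hd, rfl⟩
    rw [Subgroup.mem_centralizer_iff]
    intro h hh
    have hhK : h ∈ K := hPK hh
    have := hcomm d ⟨h, hhK⟩ hd (Subgroup.mem_subgroupOf.mpr hh)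
    have hGcomm : (d : G) * h = h * (d : G) := congrArg (Subtype.val : ↥K → G) this
    exact hGcomm.symm
  have hD'P : D' ≤ P := le_trans hD'cent (centralizer_pCore_le p G hp hO)
  have hcard1 : Nat.card D' = 1 := by
    have h1 : Nat.card D' ∣ Nat.card P := Subgroup.card_dvd_of_le hD'P
    rw [hnp] at h1
    have hcop2 : (Nat.card D').Coprime (p ^ np) := by
      rw [hcardD']
      exact Nat.Coprime.pow_right _ hDcop
    exact Nat.Coprime.eq_one_of_dvd hcop2 h1
  rw [hcardD'] at hcard1
  exact Subgroup.card_eq_one.mp hcard1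

end SubLemmas

section SylowEq
variable {G : Type*} [Group G]

/-- A p-subgroup of index coprime to p is a Sylow p-subgroup. -/
theorem exists_sylow_eq {p : ℕ} (hp : p.Prime) [Finite G] {S : Subgroup G}
    (hS : IsPGroup p S) (hidx : ¬ p ∣ S.index) : ∃ P : Sylow p G, (P : Subgroup G) = S := by
  haveI : Fact p.Prime := ⟨hp⟩
  obtain ⟨Q, hQ⟩ := hS.exists_le_sylow
  refine ⟨Q, le_antisymm ?_ hQ⟩
  have h1 : S.relIndex ↑Q * (Q : Subgroup G).index = S.index := Subgroup.relIndex_mul_index hQ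
  have h2 : S.relIndex ↑Q ∣ Nat.card ↥(Q : Subgroup G) := by
    rw [Subgroup.relIndex]
    exact Subgroup.index_dvd_card _
  obtain ⟨k, hk⟩ := (IsPGroup.iff_card).mp Q.isPGroup'
  rw [hk] at h2
  have h3 : S.relIndex ↑Q ∣ S.index := ⟨_, h1.symm⟩
  have hcop : (S.relIndex ↑Q).Coprime p := by
    rcases Nat.coprime_or_dvd_of_prime hp (S.relIndex ↑Q) with h | h
    · exact Nat.coprime_comm.mp h
    · exact absurd (h.trans h3) hidx
  have hrel1 : S.relIndex ↑Q = 1 :=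
    Nat.Coprime.eq_one_of_dvd (Nat.Coprime.pow_right k hcop) h2
  have : S.subgroupOf ↑Q = ⊤ := Subgroup.index_eq_one.mp hrel1
  exact Subgroup.subgroupOf_eq_top.mp this

end SylowEq

section LemmaL
universe u

/-- The key induction: if for every prime `r` dividing `|G|` there is a Hall `{p,r}`-subgroup
`K` with `q ∤ |K/O_{p',p}(K)|`, then `q ∤ |G/O_{p',p}(G)|`. -/
theorem lemmaL_aux (p q : ℕ) (hp : p.Prime) (hq : q.Prime) :
    ∀ n : ℕ, ∀ (G : Type u) [Group G] [Finite G] [Group.IsSolvable G], Nat.card G ≤ n →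
    (∀ r : ℕ, r.Prime → r ∣ Nat.card G → ∃ K : Subgroup G,
      (∀ t : ℕ, t.Prime → t ∣ Nat.card K → (t = p ∨ t = r)) ∧
      ¬ p ∣ K.index ∧ ¬ r ∣ K.index ∧ ¬ q ∣ Nat.card (↥K ⧸ OpPrimeP p ↥K)) →
    ¬ q ∣ Nat.card (G ⧸ OpPrimeP p G) := by
  haveI : Fact p.Prime := ⟨hp⟩
  haveI : Fact q.Prime := ⟨hq⟩
  intro n
  induction n with
  | zero =>
    intro G _ _ _ hcard _
    have := Nat.card_pos (α := G)
    omega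
  | succ n IH =>
    intro G _ _ _ hcard hyp
    by_cases hle : Nat.card G ≤ n
    · exact IH G hle hyp
    by_cases hO : pPrimeCore p G = ⊥
    · -- trivial p'-core case
      by_cases hqG : q ∣ Nat.card G
      · by_cases hqp : q = p
        · -- the loop case: show the Sylow p-subgroup is normal
          subst hqp
          set m := Nat.card (Sylow q G) with hm
          obtain ⟨P0⟩ : Nonempty (Sylow q G) := inferInstance
          have hmdvd : m ∣ Nat.card G := by
            rw [hm, Sylow.card_eq_index_normalizer P0]
            exact Subgroup.index_dvd_card _
          have hqm : ¬ q ∣ m := by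
            intro hd
            have h1 : m % q = 1 % q := card_sylow_modEq_one q G
            have h2 : m % q = 0 := Nat.mod_eq_zero_of_dvd hd
            have h3 : 1 % q = 1 := Nat.mod_eq_of_lt hq.one_lt
            omega
          have hrm : ∀ r : ℕ, r.Prime → r ∣ m → False := by
            intro r hr hrmdvd
            have hrG : r ∣ Nat.card G := hrmdvd.trans hmdvd
            by_cases hrq : r = q
            · exact hqm (hrq ▸ hrmdvd)
            obtain ⟨K, hKt, hKp, hKr, hKq⟩ := hyp r hr hrG
            have hKO : pPrimeCore q ↥K = ⊥ := pPrimeCore_subgroup_eq_bot hq hO hKp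
            have hWeq : OpPrimeP q ↥K = pCore q ↥K := OpPrimeP_eq_pCore_of_bot hKO
            rw [hWeq] at hKq
            set W := pCore q ↥K with hWdef
            have hWp : IsPGroup q W := pCore_isPGroup q ↥K
            have hKq' : ¬ q ∣ W.index := by
              rwa [Subgroup.index_eq_card]
            set S := W.map K.subtype with hSdef
            have hSp : IsPGroup q S := hWp.map _
            have hcardS : Nat.card S = Nat.card W :=
              (Nat.card_congr (Subgroup.equivMapOfInjective _ _ K.subtype_injective).toEquiv).symm
            have hSidx_eq : S.index = W.index * K.index := by
              have h1 := Subgroup.index_mul_card S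
              have h2 := Subgroup.index_mul_card W
              have h3 := Subgroup.index_mul_card K
              have hWpos : 0 < Nat.card W := Nat.card_pos
              have h4 : S.index * Nat.card W = (W.index * K.index) * Nat.card W := by
                rw [← hcardS]
                calc S.index * Nat.card S = Nat.card G := h1
                  _ = K.index * Nat.card K := h3.symm
                  _ = K.index * (W.index * Nat.card W) := by rw [h2]
                  _ = W.index * K.index * Nat.card S := by rw [hcardS]; ring
              exact Nat.eq_of_mul_eq_mul_right hWpos h4
            have hSidx : ¬ q ∣ S.index := by
              rw [hSidx_eq]
              intro hd
              rcases (Nat.Prime.dvd_mul hq).mp hd with h | h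
              · exact hKq' h
              · exact hKp h
            obtain ⟨Psy, hPsy⟩ := exists_sylow_eq hq hSp hSidx
            have hKnorm : K ≤ (Subgroup.normalizer (S : Set G)) := by
              intro k hk
              rw [Subgroup.mem_normalizer_iff]
              intro h
              constructor
              · rintro ⟨w, hw, rfl⟩
                have hconj : (⟨k, hk⟩ : ↥K) * w * (⟨k, hk⟩ : ↥K)⁻¹ ∈ W :=
                  (pCore_normal q ↥K).conj_mem w hw ⟨k, hk⟩
                exact ⟨_, hconj, rfl⟩
              · intro hh
                obtain ⟨w, hw, hweq⟩ := hh
                have hconj : (⟨k, hk⟩ : ↥K)⁻¹ * w * ((⟨k, hk⟩ : ↥K)⁻¹)⁻¹ ∈ W :=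
                  (pCore_normal q ↥K).conj_mem w hw (⟨k, hk⟩ : ↥K)⁻¹
                refine ⟨_, hconj, ?_⟩
                show k⁻¹ * K.subtype w * k⁻¹⁻¹ = h
                rw [hweq]
                group
            have hm_eq : m = (Subgroup.normalizer (S : Set G)).index := by
              rw [hm, Sylow.card_eq_index_normalizer Psy, ← hPsy]; rfl
            have hdvd1 : r ∣ (Subgroup.normalizer (S : Set G)).index := hm_eq ▸ hrmdvd
            have hdvd2 : (Subgroup.normalizer (S : Set G)).index ∣ K.index := Subgroup.index_dvd_of_le hKnorm
            exact hKr (hdvd1.trans hdvd2)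
          have hm1 : m = 1 := by
            by_contra hne
            obtain ⟨r, hr, hrd⟩ := Nat.exists_prime_and_dvd hne
            exact hrm r hr hrd
          have hP0idx : (Subgroup.normalizer ((P0 : Subgroup G) : Set G)).index = 1 := by
            exact (Sylow.card_eq_index_normalizer P0).symm.trans hm1
          have hP0norm : (P0 : Subgroup G).Normal :=
            Subgroup.normalizer_eq_top_iff.mp (Subgroup.index_eq_one.mp hP0idx)
          have hle' : (P0 : Subgroup G) ≤ pCore q G := le_pCore hP0norm P0.isPGroup'
          rw [OpPrimeP_eq_pCore_of_bot hO, ← Subgroup.index_eq_card]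
          intro hd
          have h2 : (pCore q G).index ∣ (P0 : Subgroup G).index := Subgroup.index_dvd_of_le hle'
          exact Sylow.not_dvd_index P0 (hd.trans h2)
        · -- q ≠ p: impossible that q divides |G| at all
          obtain ⟨K, hKt, hKp, hKq_idx, hKq⟩ := hyp q hq hqG
          have hKO : pPrimeCore p ↥K = ⊥ := pPrimeCore_subgroup_eq_bot hp hO hKp
          have hWeq : OpPrimeP p ↥K = pCore p ↥K := OpPrimeP_eq_pCore_of_bot hKO
          rw [hWeq] at hKq
          obtain ⟨w, hw⟩ := (IsPGroup.iff_card).mp (pCore_isPGroup p ↥K)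
          have hqK : ¬ q ∣ Nat.card K := by
            intro hd
            have h1 := Subgroup.card_eq_card_quotient_mul_card_subgroup (pCore p ↥K)
            rw [h1] at hd
            rcases (Nat.Prime.dvd_mul hq).mp hd with h | h
            · exact hKq h
            · rw [hw] at h
              exact hqp ((Nat.prime_dvd_prime_iff_eq hq hp).mp (hq.dvd_of_dvd_pow h))
          exfalso
          have h3 := Subgroup.index_mul_card K
          rcases (Nat.Prime.dvd_mul hq).mp (h3 ▸ hqG) with h | h
          · exact hKq_idx h
          · exact hqK h
      · -- q does not divide |G|
        intro hd
        refine hqG (hd.trans ?_)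
        rw [← Subgroup.index_eq_card]
        exact Subgroup.index_dvd_card _
    · -- nontrivial p'-core: pass to the quotient
      have hOgt : 1 < Nat.card (pPrimeCore p G) := (Subgroup.one_lt_card_iff_ne_bot (pPrimeCore p G)).mpr hO
      have hqc := Subgroup.card_eq_card_quotient_mul_card_subgroup (pPrimeCore p G)
      have hqcard : Nat.card (G ⧸ pPrimeCore p G) ≤ n := by
        have hqpos : 0 < Nat.card (G ⧸ pPrimeCore p G) := Nat.card_pos
        nlinarith
      have hypbar : ∀ r : ℕ, r.Prime → r ∣ Nat.card (G ⧸ pPrimeCore p G) →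
          ∃ K : Subgroup (G ⧸ pPrimeCore p G),
            (∀ t : ℕ, t.Prime → t ∣ Nat.card K → (t = p ∨ t = r)) ∧
            ¬ p ∣ K.index ∧ ¬ r ∣ K.index ∧ ¬ q ∣ Nat.card (↥K ⧸ OpPrimeP p ↥K) := by
        intro r hr hrd
        have hrG : r ∣ Nat.card G := hrd.trans ⟨Nat.card (pPrimeCore p G), hqc⟩
        obtain ⟨K, hKt, hKp, hKr, hKq⟩ := hyp r hr hrG
        have hidx : (K.map (QuotientGroup.mk' (pPrimeCore p G))).index ∣ K.index := by
          have h1 : (K.map (QuotientGroup.mk' (pPrimeCore p G))).index =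
              ((K.map (QuotientGroup.mk' (pPrimeCore p G))).comap (QuotientGroup.mk' (pPrimeCore p G))).index :=
            (Subgroup.index_comap_of_surjective _ (QuotientGroup.mk'_surjective (pPrimeCore p G))).symm
          rw [h1, Subgroup.comap_map_eq]
          exact Subgroup.index_dvd_of_le le_sup_left
        refine ⟨K.map (QuotientGroup.mk' (pPrimeCore p G)), ?_, ?_, ?_, ?_⟩
        · intro t ht htd
          exact hKt t ht (htd.trans (card_map_dvd _ _))
        · exact fun hd => hKp (hd.trans hidx)
        · exact fun hd => hKr (hd.trans hidx)
        · set f := (QuotientGroup.mk' (pPrimeCore p G)).comp K.subtype with hf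
          have hrange : f.range = K.map (QuotientGroup.mk' (pPrimeCore p G)) := by
            rw [hf, MonoidHom.range_comp, Subgroup.range_subtype]
          have e := (QuotientGroup.quotientKerEquivRange f).trans (MulEquiv.subgroupCongr hrange)
          intro hd
          apply hKq
          have h1 : Nat.card (↥(K.map (QuotientGroup.mk' (pPrimeCore p G))) ⧸
              OpPrimeP p ↥(K.map (QuotientGroup.mk' (pPrimeCore p G)))) =
              Nat.card ((↥K ⧸ f.ker) ⧸ OpPrimeP p (↥K ⧸ f.ker)) :=
            cardQ_eq_of_mulEquiv e.symm
          have h2 : Nat.card ((↥K ⧸ f.ker) ⧸ OpPrimeP p (↥K ⧸ f.ker)) ∣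
              Nat.card (↥K ⧸ OpPrimeP p ↥K) := cardQ_quotient_dvd f.ker
          rw [h1] at hd
          exact hd.trans h2
      have hres := IH (G ⧸ pPrimeCore p G) hqcard hypbar
      rw [cardQ_quotient_pPrimeCore p G] at hres
      exact hres

end LemmaL

section MainAssembly
variable {G : Type*} [Group G]

theorem index_map_subtype [Finite G] (H : Subgroup G) (K₀ : Subgroup ↥H) :
    (K₀.map H.subtype).index = K₀.index * H.index := by
  have hmapcard : Nat.card (K₀.map H.subtype) = Nat.card K₀ :=
    (Nat.card_congr (Subgroup.equivMapOfInjective _ _ H.subtype_injective).toEquiv).symm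
  have hKpos : 0 < Nat.card K₀ := Nat.card_pos
  have h1 := Subgroup.index_mul_card (K₀.map H.subtype)
  have h2 := Subgroup.index_mul_card K₀
  have h3 := Subgroup.index_mul_card H
  rw [hmapcard] at h1
  have h4 : (K₀.index * H.index) * Nat.card K₀ = Nat.card G := by
    calc (K₀.index * H.index) * Nat.card K₀ = (K₀.index * Nat.card K₀) * H.index := by ring
      _ = Nat.card H * H.index := by rw [h2]
      _ = Nat.card G := by rw [Nat.mul_comm]; exact h3
  exact Nat.eq_of_mul_eq_mul_right hKpos (h1.trans h4.symm)

theorem not_dvd_of_coprime {s X Y : ℕ} (hs : s.Prime) (h : X.Coprime Y) (hX : s ∣ X) :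
    ¬ s ∣ Y := by
  intro hY
  have hg : s ∣ Nat.gcd X Y := Nat.dvd_gcd hX hY
  rw [Nat.Coprime] at h
  rw [h] at hg
  exact hs.ne_one (Nat.dvd_one.mp hg)

/-- From a subgroup avoiding p,r in its index and avoiding the q-divisibility,
produce a Hall {p,r}-subgroup of G with the same property. -/
theorem build_hall [Finite G] [Group.IsSolvable G] {p q r : ℕ} (hp : p.Prime) (hr : r.Prime)
    (H : Subgroup G) (h1 : ¬ p ∣ H.index) (h2 : ¬ r ∣ H.index)
    (hq : ¬ q ∣ Nat.card (↥H ⧸ OpPrimeP p ↥H)) :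
    ∃ K : Subgroup G, (∀ t : ℕ, t.Prime → t ∣ Nat.card K → (t = p ∨ t = r)) ∧
      ¬ p ∣ K.index ∧ ¬ r ∣ K.index ∧ ¬ q ∣ Nat.card (↥K ⧸ OpPrimeP p ↥K) := by
  obtain ⟨K₀, hK₀t, hK₀idx⟩ := exists_hall ({p, r} : Set ℕ) ↥H
  have hc : Nat.card (K₀.map H.subtype) = Nat.card K₀ :=
    (Nat.card_congr (Subgroup.equivMapOfInjective _ _ H.subtype_injective).toEquiv).symm
  refine ⟨K₀.map H.subtype, ?_, ?_, ?_, ?_⟩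
  · intro t ht htd
    rw [hc] at htd
    have := hK₀t t ht htd
    simpa [Set.mem_insert_iff] using this
  · rw [index_map_subtype]
    intro hd
    rcases (Nat.Prime.dvd_mul hp).mp hd with h | h
    · exact hK₀idx p (Set.mem_insert p _) hp h
    · exact h1 h
  · rw [index_map_subtype]
    intro hd
    rcases (Nat.Prime.dvd_mul hr).mp hd with h | h
    · exact hK₀idx r (Set.mem_insert_of_mem p rfl) hr h
    · exact h2 h
  · intro hd
    apply hq
    have e := Subgroup.equivMapOfInjective K₀ H.subtype H.subtype_injective
    have h1' := cardQ_eq_of_mulEquiv (p := p) e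
    rw [← h1'] at hd
    exact hd.trans (cardQ_subgroup_dvd K₀)

theorem main_theorem {G : Type*} [Group G] [Finite G] [Group.IsSolvable G]
    (A B C : Subgroup G) (hAB : Nat.Coprime A.index B.index)
    (hAC : Nat.Coprime A.index C.index) (hBC : Nat.Coprime B.index C.index) :
    (Nat.card G).primeFactors =
      (Nat.card A).primeFactors ∪ (Nat.card B).primeFactors ∪ (Nat.card C).primeFactors ∧
    ∀ p q : ℕ, p.Prime → q.Prime →
      (q ∣ Nat.card (G ⧸ OpPrimeP p G) ↔
        q ∣ Nat.card (A ⧸ OpPrimeP p A) ∨ q ∣ Nat.card (B ⧸ OpPrimeP p B) ∨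
          q ∣ Nat.card (C ⧸ OpPrimeP p C)) := by
  have hGpos : Nat.card G ≠ 0 := Nat.card_pos.ne'
  have hchoose : ∀ p r : ℕ, p.Prime → r.Prime →
      (¬ p ∣ A.index ∧ ¬ r ∣ A.index) ∨ (¬ p ∣ B.index ∧ ¬ r ∣ B.index) ∨
      (¬ p ∣ C.index ∧ ¬ r ∣ C.index) := by
    intro p r hp hr
    by_cases hpA : p ∣ A.index
    · have hpB : ¬ p ∣ B.index := not_dvd_of_coprime hp hAB hpA
      have hpC : ¬ p ∣ C.index := not_dvd_of_coprime hp hAC hpA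
      by_cases hrB : r ∣ B.index
      · exact Or.inr (Or.inr ⟨hpC, not_dvd_of_coprime hr hBC hrB⟩)
      · exact Or.inr (Or.inl ⟨hpB, hrB⟩)
    · by_cases hrA : r ∣ A.index
      · have hrB : ¬ r ∣ B.index := not_dvd_of_coprime hr hAB hrA
        have hrC : ¬ r ∣ C.index := not_dvd_of_coprime hr hAC hrA
        by_cases hpB : p ∣ B.index
        · exact Or.inr (Or.inr ⟨not_dvd_of_coprime hp hBC hpB, hrC⟩)
        · exact Or.inr (Or.inl ⟨hpB, hrB⟩)
      · exact Or.inl ⟨hpA, hrA⟩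
  constructor
  · -- prime factors equality
    apply Finset.Subset.antisymm
    · intro s hs
      rw [Nat.mem_primeFactors] at hs
      obtain ⟨hsp, hsd, -⟩ := hs
      have hmem : ∀ H : Subgroup G, ¬ s ∣ H.index → s ∣ Nat.card H := by
        intro H hH
        have h1 := Subgroup.index_mul_card H
        rcases (Nat.Prime.dvd_mul hsp).mp (h1 ▸ hsd) with h | h
        · exact absurd h hH
        · exact h
      obtain (⟨h1, -⟩ | ⟨h1, -⟩ | ⟨h1, -⟩) := hchoose s s hsp hsp
      · exact Finset.mem_union_left _ (Finset.mem_union_left _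
          (Nat.mem_primeFactors.mpr ⟨hsp, hmem A h1, Nat.card_pos.ne'⟩))
      · exact Finset.mem_union_left _ (Finset.mem_union_right _
          (Nat.mem_primeFactors.mpr ⟨hsp, hmem B h1, Nat.card_pos.ne'⟩))
      · exact Finset.mem_union_right _
          (Nat.mem_primeFactors.mpr ⟨hsp, hmem C h1, Nat.card_pos.ne'⟩)
    · refine Finset.union_subset (Finset.union_subset ?_ ?_) ?_
      · exact Nat.primeFactors_mono (Subgroup.card_subgroup_dvd_card A) hGpos
      · exact Nat.primeFactors_mono (Subgroup.card_subgroup_dvd_card B) hGpos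
      · exact Nat.primeFactors_mono (Subgroup.card_subgroup_dvd_card C) hGpos
  · intro p q hp hq
    constructor
    · intro hG
      by_contra hcon
      push_neg at hcon
      obtain ⟨hA, hB, hC⟩ := hcon
      refine lemmaL_aux p q hp hq (Nat.card G) G le_rfl ?_ hG
      intro r hr hrG
      obtain (⟨h1, h2⟩ | ⟨h1, h2⟩ | ⟨h1, h2⟩) := hchoose p r hp hr
      · exact build_hall hp hr A h1 h2 hA
      · exact build_hall hp hr B h1 h2 hB
      · exact build_hall hp hr C h1 h2 hC
    · rintro (h | h | h)
      · exact h.trans (cardQ_subgroup_dvd A)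
      · exact h.trans (cardQ_subgroup_dvd B)
      · exact h.trans (cardQ_subgroup_dvd C)

end MainAssembly

/-- If a finite solvable group `G` has subgroups `A`, `B`, `C` of pairwise coprime indices,
then the Hawkes graph of `G` is the union of the Hawkes graphs of `A`, `B` and `C`. -/
theorem hawkes_of_three_coprime_subgroups {G : Type*} [Group G] [Finite G] [Group.IsSolvable G]
    (A B C : Subgroup G) (hAB : Nat.Coprime A.index B.index)
    (hAC : Nat.Coprime A.index C.index) (hBC : Nat.Coprime B.index C.index) :
    (Nat.card G).primeFactors =
      (Nat.card A).primeFactors ∪ (Nat.card B).primeFactors ∪ (Nat.card C).primeFactors ∧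
    ∀ p q : ℕ, p.Prime → q.Prime →
      (q ∣ Nat.card (G ⧸ OpPrimeP p G) ↔
        q ∣ Nat.card (A ⧸ OpPrimeP p A) ∨ q ∣ Nat.card (B ⧸ OpPrimeP p B) ∨
          q ∣ Nat.card (C ⧸ OpPrimeP p C)) := by
  exact main_theorem A B C hAB hAC hBC
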